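/- arXiv:1901.01612 — 3 statements merged into one kernel-verified Lean document; each statement's English description precedes it below -/
import Mathlib

section
/- Let G be a Hausdorff ample groupoid, let G^a denote the inverse semigroup of all compact open bisections of G under the product UV={uv : u∈U, v∈V, d(u)=r(v)} and inverse U⁻¹={u⁻¹ : u∈U}, and for each B∈G^a let π_B : d(B)→r(B) be the homeomorphism u↦r(Bu). Then the semigroup homomorphism π : G^a → I(G⁰), B↦π_B, into the inverse semigroup of partial homeomorphisms of G⁰ is injective if and only if G is effective. -/
open Set Function

/-- A groupoid structure on a type `G`: a small category in which every morphism is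
invertible, encoded with a total multiplication `mul` that is only meaningful on
composable pairs.  Here `d x = x⁻¹x` and `r x = xx⁻¹`, and a pair `(x, y)` is
composable exactly when `d x = r y`. -/
structure GroupoidStr (G : Type*) where
  mul : G → G → G
  inv : G → G
  inv_inv : ∀ x, inv (inv x) = x
  /-- `x · d x = x` -/
  mul_d : ∀ x, mul x (mul (inv x) x) = x
  /-- `r x · x = x` -/
  r_mul : ∀ x, mul (mul x (inv x)) x = x
  /-- associativity on composable pairs -/
  assoc : ∀ x y z, mul (inv x) x = mul y (inv y) → mul (inv y) y = mul z (inv z) →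
    mul (mul x y) z = mul x (mul y z)
  /-- `d (xy) = d y` for composable `x, y` -/
  d_comp : ∀ x y, mul (inv x) x = mul y (inv y) →
    mul (inv (mul x y)) (mul x y) = mul (inv y) y
  /-- `r (xy) = r x` for composable `x, y` -/
  r_comp : ∀ x y, mul (inv x) x = mul y (inv y) →
    mul (mul x y) (inv (mul x y)) = mul x (inv x)
  /-- `(xy)⁻¹ = y⁻¹x⁻¹` for composable `x, y` -/
  inv_mul : ∀ x y, mul (inv x) x = mul y (inv y) → inv (mul x y) = mul (inv y) (inv x)
  /-- units are their own inverses -/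
  unit_self_inv : ∀ x, inv (mul (inv x) x) = mul (inv x) x
  /-- units are idempotents -/
  unit_idem : ∀ x, mul (mul (inv x) x) (mul (inv x) x) = mul (inv x) x

namespace GroupoidStr

variable {G : Type*} (S : GroupoidStr G)

/-- The domain (source) `d x = x⁻¹ x` of `x`. -/
def d (x : G) : G := S.mul (S.inv x) x

/-- The range `r x = x x⁻¹` of `x`. -/
def r (x : G) : G := S.mul x (S.inv x)

/-- The unit space `G⁰ = d(G) = r(G)`. -/
def unitSpace : Set G := Set.range S.d

/-- The isotropy bundle `Iso(G) = {x | d x = r x}`. -/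
def IsoSet : Set G := {x | S.d x = S.r x}

/-- The orbit of a unit `u`: `{r γ : d γ = u}`. -/
def orbit (u : G) : Set G := S.r '' {γ : G | S.d γ = u}

/-- A subset `U` of the unit space is invariant if `d γ ∈ U` implies `r γ ∈ U`. -/
def IsInvariant (U : Set G) : Prop := ∀ γ : G, S.d γ ∈ U → S.r γ ∈ U

section Top

variable [TopologicalSpace G]

/-- `G` is a topological groupoid: inversion and composition (on the set of composable
pairs, with the relative product topology) are continuous. -/
def IsTopological : Prop :=
  Continuous S.inv ∧
    Continuous fun p : {p : G × G // S.d p.1 = S.r p.2} => S.mul p.1.1 p.1.2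

/-- An open bisection: an open set on which both `d` and `r` restrict to homeomorphisms
onto open subsets of the unit space. -/
def IsOpenBisection (U : Set G) : Prop :=
  IsOpen U ∧ Set.InjOn S.d U ∧ Set.InjOn S.r U ∧
    (∀ V ⊆ U, IsOpen V → IsOpen (S.d '' V)) ∧ (∀ V ⊆ U, IsOpen V → IsOpen (S.r '' V))

/-- An étale groupoid: there is a basis of open bisections (equivalently, `d` is a local
homeomorphism). -/
def IsEtale : Prop := ∀ x : G, ∃ U, x ∈ U ∧ S.IsOpenBisection U

/-- An ample groupoid: there is a basis of compact open bisections. -/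
def IsAmple : Prop :=
  ∀ (x : G) (W : Set G), x ∈ W → IsOpen W →
    ∃ U, x ∈ U ∧ U ⊆ W ∧ IsCompact U ∧ S.IsOpenBisection U

def IsCompactOpenBisection (U : Set G) : Prop := IsCompact U ∧ S.IsOpenBisection U

/-- `G` is effective if the interior of the isotropy bundle is the unit space. -/
def IsEffective : Prop := interior S.IsoSet = S.unitSpace

variable (R : Type*) [CommRing R]

/-- The underlying set of the Steinberg algebra `A_R(G)`: locally constant,
compactly supported `R`-valued functions on `G`. -/
def SteinSet : Set (G → R) := {f | IsLocallyConstant f ∧ HasCompactSupport f}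

variable {R}

/-- Convolution: `(f * g) γ = ∑_{αβ = γ} f α * g β`. -/
noncomputable def conv (f g : G → R) : G → R := fun γ =>
  ∑ᶠ p ∈ {p : G × G | S.d p.1 = S.r p.2 ∧ S.mul p.1 p.2 = γ}, f p.1 * g p.2

end Top

end GroupoidStr

namespace GroupoidStr

variable {G : Type*} (S : GroupoidStr G)

/-- The graph of the partial homeomorphism `π_B : d(B) → r(B)`, `u ↦ r(Bu)`, of the unit
space associated to a bisection `B`; as a set of pairs it is `{(d b, r b) : b ∈ B}`. -/
def graphOf (B : Set G) : Set (G × G) := {p | ∃ b ∈ B, S.d b = p.1 ∧ S.r b = p.2}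

end GroupoidStr

/-!
If `B` and `C` are open bisections with the same graph and `b ∈ B`, `c ∈ C` have the same
domain and range, then `b c⁻¹` lies in the open set `B C⁻¹`, which consists of isotropy;
effectiveness makes `b c⁻¹` a unit, whence `b = c`. Conversely, a compact open bisection `B`
inside the interior of the isotropy has the same graph as the compact open bisection `d(B)`
of units, so injectivity forces `B = d(B) ⊆ G⁰`.
-/

lemma continuousOn_invFunOn_of_isOpen_image {X Y : Type*} [TopologicalSpace X]
    [TopologicalSpace Y] [Nonempty X] {f : X → Y} {s : Set X} (hs : IsOpen s) (hinj : InjOn f s)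
    (himage : ∀ t ⊆ s, IsOpen t → IsOpen (f '' t)) :
    ContinuousOn (invFunOn f s) (f '' s) := by
  rw [continuousOn_open_iff (himage s subset_rfl hs)]
  intro t ht
  rw [inter_comm, ← hinj.leftInvOn_invFunOn.image_inter']
  exact himage _ inter_subset_right (ht.inter hs)

namespace GroupoidStr

variable {G : Type*} (S : GroupoidStr G)

def setMul (U V : Set G) : Set G := {x | ∃ u ∈ U, ∃ v ∈ V, S.d u = S.r v ∧ S.mul u v = x}

section Algebra

lemma d_inv (x : G) : S.d (S.inv x) = S.r x := by
  unfold d r; rw [S.inv_inv]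

lemma r_inv (x : G) : S.r (S.inv x) = S.d x := by
  unfold d r; rw [S.inv_inv]

lemma d_mem_unitSpace (x : G) : S.d x ∈ S.unitSpace := ⟨x, rfl⟩

lemma d_of_mem_unitSpace {u : G} (hu : u ∈ S.unitSpace) : S.d u = u := by
  obtain ⟨x, rfl⟩ := hu
  change S.mul (S.inv (S.d x)) (S.d x) = S.d x
  rw [d, S.unit_self_inv, S.unit_idem]

lemma r_of_mem_unitSpace {u : G} (hu : u ∈ S.unitSpace) : S.r u = u := by
  obtain ⟨x, rfl⟩ := hu
  change S.mul (S.d x) (S.inv (S.d x)) = S.d x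
  rw [d, S.unit_self_inv, S.unit_idem]

lemma unitSpace_subset_isoSet : S.unitSpace ⊆ S.IsoSet := fun _ hu =>
  (S.d_of_mem_unitSpace hu).trans (S.r_of_mem_unitSpace hu).symm

lemma d_mul_eq {x y : G} (h : S.d x = S.r y) : S.d (S.mul x y) = S.d y := S.d_comp x y h

lemma r_mul_eq {x y : G} (h : S.d x = S.r y) : S.r (S.mul x y) = S.r x := S.r_comp x y h

lemma inv_mul_cancel_left {x y : G} (h : S.d x = S.r y) : S.mul (S.inv x) (S.mul x y) = y := by
  rw [← S.assoc (S.inv x) x y (S.d_inv x) h]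
  exact (congrArg (S.mul · y) h).trans (S.r_mul y)

lemma mul_inv_cancel_left {x y : G} (h : S.r x = S.r y) : S.mul x (S.mul (S.inv x) y) = y := by
  have hx : S.d x = S.r (S.inv x) := (S.r_inv x).symm
  have hy : S.d (S.inv x) = S.r y := (S.d_inv x).trans h
  rw [← S.assoc x (S.inv x) y hx hy]
  exact (congrArg (S.mul · y) h).trans (S.r_mul y)

lemma mul_inv_mul_cancel {x y : G} (h : S.d x = S.d y) : S.mul (S.mul x (S.inv y)) y = x := by
  have hx : S.d x = S.r (S.inv y) := h.trans (S.r_inv y).symm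
  have hy : S.d (S.inv y) = S.r y := S.d_inv y
  rw [S.assoc x (S.inv y) y hx hy]
  exact (congrArg (S.mul x) h.symm).trans (S.mul_d x)

lemma eq_of_mul_inv_mem_unitSpace {b c : G} (hbc : S.d b = S.d c)
    (hunit : S.mul b (S.inv c) ∈ S.unitSpace) : b = c := by
  have hcomp : S.d b = S.r (S.inv c) := hbc.trans (S.r_inv c).symm
  have hrc : S.mul b (S.inv c) = S.r c := by
    rw [← S.d_of_mem_unitSpace hunit, S.d_mul_eq hcomp, S.d_inv]
  rw [← S.mul_inv_mul_cancel hbc, hrc]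
  exact S.r_mul c

lemma image_d_eq_self {U : Set G} (hU : U ⊆ S.unitSpace) : S.d '' U = U :=
  EqOn.image_eq_self fun _ hu => S.d_of_mem_unitSpace (hU hu)

lemma image_r_eq_self {U : Set G} (hU : U ⊆ S.unitSpace) : S.r '' U = U :=
  EqOn.image_eq_self fun _ hu => S.r_of_mem_unitSpace (hU hu)

lemma graphOf_image_d {B : Set G} (hB : B ⊆ S.IsoSet) : S.graphOf (S.d '' B) = S.graphOf B := by
  ext p
  constructor
  · rintro ⟨_, ⟨b, hb, rfl⟩, h₁, h₂⟩
    rw [S.d_of_mem_unitSpace (S.d_mem_unitSpace b)] at h₁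
    rw [S.r_of_mem_unitSpace (S.d_mem_unitSpace b), hB hb] at h₂
    exact ⟨b, hb, h₁, h₂⟩
  · rintro ⟨b, hb, h₁, h₂⟩
    refine ⟨S.d b, mem_image_of_mem _ hb, ?_, ?_⟩
    · rw [S.d_of_mem_unitSpace (S.d_mem_unitSpace b), h₁]
    · rw [S.r_of_mem_unitSpace (S.d_mem_unitSpace b), hB hb, h₂]

lemma setMul_inv_subset_isoSet {B C : Set G} (hC : InjOn S.d C)
    (hg : S.graphOf B ⊆ S.graphOf C) : S.setMul B (S.inv ⁻¹' C) ⊆ S.IsoSet := by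
  rintro _ ⟨b, hb, v, hv, hbv, rfl⟩
  obtain ⟨c, hc, hdc, hrc⟩ := hg (show (S.d b, S.r b) ∈ S.graphOf B from ⟨b, hb, rfl, rfl⟩)
  have hcv : c = S.inv v := hC hc hv (by rw [hdc, hbv, S.d_inv])
  change S.d (S.mul b v) = S.r (S.mul b v)
  rw [S.d_mul_eq hbv, S.r_mul_eq hbv, ← S.r_inv, ← hcv, hrc]

/-- Over an open bisection `U`, membership in `U V` is tested by multiplying on the left by the
inverse of the unique element of `U` with the same range. -/
lemma setMul_eq_inter_preimage [Nonempty G] {U V : Set G} (hU : InjOn S.r U) :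
    S.setMul U V = S.r ⁻¹' (S.r '' U) ∩
      (fun x => S.mul (S.inv (invFunOn S.r U (S.r x))) x) ⁻¹' V := by
  ext x
  constructor
  · rintro ⟨u, hu, v, hv, huv, rfl⟩
    refine ⟨⟨u, hu, (S.r_mul_eq huv).symm⟩, ?_⟩
    rwa [mem_preimage, S.r_mul_eq huv, hU.leftInvOn_invFunOn hu, S.inv_mul_cancel_left huv]
  · rintro ⟨hx, hxV⟩
    have hru : S.r (invFunOn S.r U (S.r x)) = S.r x := invFunOn_eq hx
    refine ⟨_, invFunOn_mem hx, _, hxV, ?_, S.mul_inv_cancel_left hru⟩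
    rw [S.r_mul_eq (by rw [S.d_inv, hru]), S.r_inv]

end Algebra

section Topology

variable [TopologicalSpace G]

lemma continuous_d (hTop : S.IsTopological) : Continuous S.d :=
  hTop.2.comp <| (hTop.1.prodMk continuous_id).subtype_mk fun x => S.d_inv x

lemma continuous_r (hTop : S.IsTopological) : Continuous S.r :=
  hTop.2.comp <| (continuous_id.prodMk hTop.1).subtype_mk fun x => (S.r_inv x).symm

lemma continuousOn_mul (hTop : S.IsTopological) :
    ContinuousOn (fun p : G × G => S.mul p.1 p.2) {p | S.d p.1 = S.r p.2} :=
  continuousOn_iff_continuous_domRestrict.mpr hTop.2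

lemma IsAmple.isEtale {S : GroupoidStr G} (hAmple : S.IsAmple) : S.IsEtale := fun x =>
  let ⟨U, hxU, _, _, hU⟩ := hAmple x univ (mem_univ x) isOpen_univ
  ⟨U, hxU, hU⟩

lemma isOpenBisection_of_subset_unitSpace {U : Set G} (hU : IsOpen U)
    (hU₀ : U ⊆ S.unitSpace) : S.IsOpenBisection U := by
  refine ⟨hU, fun x hx y hy h => ?_, fun x hx y hy h => ?_, fun V hV hVo => ?_,
    fun V hV hVo => ?_⟩
  · rwa [S.d_of_mem_unitSpace (hU₀ hx), S.d_of_mem_unitSpace (hU₀ hy)] at h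
  · rwa [S.r_of_mem_unitSpace (hU₀ hx), S.r_of_mem_unitSpace (hU₀ hy)] at h
  · rwa [S.image_d_eq_self (hV.trans hU₀)]
  · rwa [S.image_r_eq_self (hV.trans hU₀)]

lemma isCompactOpenBisection_image_d (hTop : S.IsTopological) {B : Set G}
    (hB : S.IsCompactOpenBisection B) : S.IsCompactOpenBisection (S.d '' B) :=
  ⟨hB.1.image (S.continuous_d hTop), S.isOpenBisection_of_subset_unitSpace
    (hB.2.2.2.2.1 B subset_rfl hB.2.1) (image_subset_range _ _)⟩

/-- A unit `u` lies in a bisection `U`, and `d` maps the open set `U ∩ d⁻¹(U)` injectively into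
`U` while fixing `u`, so that set consists of units. -/
lemma isOpen_unitSpace (hTop : S.IsTopological) (hEtale : S.IsEtale) : IsOpen S.unitSpace := by
  refine isOpen_iff_forall_mem_open.mpr fun u hu => ?_
  obtain ⟨U, huU, hU⟩ := hEtale u
  refine ⟨U ∩ S.d ⁻¹' U, fun x hx => ?_, hU.1.inter (hU.1.preimage (S.continuous_d hTop)),
    huU, by rwa [mem_preimage, S.d_of_mem_unitSpace hu]⟩
  rw [← hU.2.1 hx.2 hx.1 (S.d_of_mem_unitSpace (S.d_mem_unitSpace x))]
  exact S.d_mem_unitSpace x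

lemma unitSpace_subset_interior_isoSet (hTop : S.IsTopological) (hEtale : S.IsEtale) :
    S.unitSpace ⊆ interior S.IsoSet :=
  interior_maximal S.unitSpace_subset_isoSet (S.isOpen_unitSpace hTop hEtale)

lemma isOpen_setMul (hTop : S.IsTopological) {U V : Set G} (hU : S.IsOpenBisection U)
    (hV : IsOpen V) : IsOpen (S.setMul U V) := by
  rcases isEmpty_or_nonempty G with hG | hG
  · exact isOpen_discrete _
  rw [S.setMul_eq_inter_preimage hU.2.2.1]
  have hrU : IsOpen (S.r '' U) := hU.2.2.2.2 U subset_rfl hU.1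
  have hinv : ContinuousOn (invFunOn S.r U) (S.r '' U) :=
    continuousOn_invFunOn_of_isOpen_image hU.1 hU.2.2.1 hU.2.2.2.2
  have hleft : ContinuousOn (fun x => S.inv (invFunOn S.r U (S.r x))) (S.r ⁻¹' (S.r '' U)) :=
    hTop.1.comp_continuousOn <| hinv.comp (S.continuous_r hTop).continuousOn fun _ hx => hx
  have hcomp : MapsTo (fun x => (S.inv (invFunOn S.r U (S.r x)), x)) (S.r ⁻¹' (S.r '' U))
      {p : G × G | S.d p.1 = S.r p.2} := fun x hx => by
    change S.d (S.inv _) = S.r x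
    rw [S.d_inv, invFunOn_eq hx]
  exact ((S.continuousOn_mul hTop).comp (hleft.prodMk continuousOn_id) hcomp).isOpen_inter_preimage
    (hrU.preimage (S.continuous_r hTop)) hV

lemma subset_of_graphOf_subset (hTop : S.IsTopological) (hEff : S.IsEffective) {B C : Set G}
    (hB : S.IsOpenBisection B) (hC : S.IsOpenBisection C) (hg : S.graphOf B ⊆ S.graphOf C) :
    B ⊆ C := by
  intro b hb
  obtain ⟨c, hc, hdc, -⟩ := hg (show (S.d b, S.r b) ∈ S.graphOf B from ⟨b, hb, rfl, rfl⟩)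
  have hmem : S.mul b (S.inv c) ∈ S.setMul B (S.inv ⁻¹' C) :=
    ⟨b, hb, S.inv c, by rwa [mem_preimage, S.inv_inv], by rw [S.r_inv, hdc], rfl⟩
  have hopen : IsOpen (S.setMul B (S.inv ⁻¹' C)) :=
    S.isOpen_setMul hTop hB (hC.1.preimage hTop.1)
  have hint : S.mul b (S.inv c) ∈ interior S.IsoSet :=
    interior_maximal (S.setMul_inv_subset_isoSet hC.2.1 hg) hopen hmem
  rw [hEff] at hint
  rwa [S.eq_of_mul_inv_mem_unitSpace hdc.symm hint]

lemma interior_isoSet_subset_unitSpace (hTop : S.IsTopological) (hAmple : S.IsAmple)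
    (hinj : InjOn S.graphOf {B : Set G | S.IsCompactOpenBisection B}) :
    interior S.IsoSet ⊆ S.unitSpace := by
  intro x hx
  obtain ⟨B, hxB, hBiso, hBc, hBo⟩ := hAmple x _ hx isOpen_interior
  have hB : S.IsCompactOpenBisection B := ⟨hBc, hBo⟩
  have hBd : B = S.d '' B := hinj hB (S.isCompactOpenBisection_image_d hTop hB)
    (S.graphOf_image_d (hBiso.trans interior_subset)).symm
  exact image_subset_range _ _ (hBd ▸ hxB)

end Topology

end GroupoidStr

theorem pi_injective_iff_effective_general {G : Type*} [TopologicalSpace G]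
    (S : GroupoidStr G) (hTop : S.IsTopological) (hAmple : S.IsAmple) :
    Set.InjOn (fun B => S.graphOf B) {B : Set G | S.IsCompactOpenBisection B} ↔
      S.IsEffective := by
  constructor
  · intro hinj
    exact (S.interior_isoSet_subset_unitSpace hTop hAmple hinj).antisymm
      (S.unitSpace_subset_interior_isoSet hTop hAmple.isEtale)
  · intro hEff B hB C hC hg
    exact (S.subset_of_graphOf_subset hTop hEff hB.2 hC.2 hg.subset).antisymm
      (S.subset_of_graphOf_subset hTop hEff hC.2 hB.2 hg.symm.subset)

/-- For a Hausdorff ample groupoid `G`, the homomorphism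
`π : G^a → I(G⁰)` sending a compact open bisection `B` to the partial homeomorphism
`π_B : d(B) → r(B)`, `u ↦ r(Bu)` (identified here with its graph
`{(d b, r b) : b ∈ B}`) is injective if and only if `G` is effective. -/
theorem pi_injective_iff_effective {G : Type*} [TopologicalSpace G]
    (S : GroupoidStr G) [T2Space G] (hTop : S.IsTopological) (hAmple : S.IsAmple) :
    Set.InjOn (fun B => S.graphOf B) {B : Set G | S.IsCompactOpenBisection B} ↔
      S.IsEffective :=
  pi_injective_iff_effective_general S hTop hAmple
end

section
/- Let E be a directed graph and G_E its graph groupoid. The unit space G_E⁰ (the boundary path space X) is finite if and only if E is a finite graph in which no cycle has an exit. -/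
open Set

section Graph

variable {V E : Type*} (gs gr : E → V)

/-- `(v, l)` is a finite path of the directed graph with source map `gs` and range map
`gr`: the edges of `l` compose (`gr eᵢ = gs eᵢ₊₁`) and start at `v` (`l = []` gives the
path of length zero at `v`). -/
def IsPathL (v : V) (l : List E) : Prop :=
  (∀ e ∈ l.head?, gs e = v) ∧ l.Chain' fun a b => gr a = gs b

/-- The range vertex of the finite path `(v, l)`. -/
def pathRng (v : V) (l : List E) : V := l.foldl (fun _ e => gr e) v

/-- A vertex is regular if it emits at least one and at most finitely many edges. -/
def RegularVert (v : V) : Prop :=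
  {e : E | gs e = v}.Finite ∧ {e : E | gs e = v}.Nonempty

/-- A boundary path: either a finite path whose range is not a regular vertex, or an
infinite path (an infinite composable sequence of edges). -/
def IsBoundary : (V × List E) ⊕ (ℕ → E) → Prop
  | .inl (v, l) => IsPathL gs gr v l ∧ ¬ RegularVert gs (pathRng gr v l)
  | .inr f => ∀ n, gr (f n) = gs (f (n + 1))

/-- The boundary path space `X` of the graph: the unit space of the graph groupoid. -/
def BPath := {x : (V × List E) ⊕ (ℕ → E) // IsBoundary gs gr x}

/-- The boundary path `x` starts with the finite path `(w, m)`. -/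
def HasPrefixP (w : V) (m : List E) (x : BPath gs gr) : Prop :=
  match x.1 with
  | .inl (v, l) => v = w ∧ m <+: l
  | .inr f => (m = [] → gs (f 0) = w) ∧ (∀ e ∈ m.head?, gs e = w) ∧
      ∀ (i : ℕ) (h : i < m.length), f i = m.get ⟨i, h⟩

/-- The cylinder set `Z(μ) = {μ x : x ∈ X}` of a finite path `μ = (w, m)`. -/
def ZP (w : V) (m : List E) : Set (BPath gs gr) := {x | HasPrefixP gs gr w m x}

/-- The topology on the boundary path space `X = G_E⁰`, with basic compact open sets
`Z(μ∖F) = Z(μ) ∖ ⋃_{e ∈ F} Z(μe)` for finite sets `F` of edges with source `r(μ)`. -/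
def unitTop : TopologicalSpace (BPath gs gr) :=
  TopologicalSpace.generateFrom
    {A | ∃ (w : V) (m : List E) (F : Set E), F.Finite ∧ IsPathL gs gr w m ∧
      (∀ e ∈ F, gs e = pathRng gr w m) ∧
      A = ZP gs gr w m \ ⋃ e ∈ F, ZP gs gr w (m ++ [e])}

/-- `x` and `y` have a common tail: removing the first `m` edges of `x` and the first
`n` edges of `y` yields the same boundary path. -/
def AgreeFrom (m n : ℕ) (x y : BPath gs gr) : Prop :=
  match x.1, y.1 with
  | .inl (v, l), .inl (w, t) =>
      m ≤ l.length ∧ n ≤ t.length ∧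
      pathRng gr v (l.take m) = pathRng gr w (t.take n) ∧ l.drop m = t.drop n
  | .inr f, .inr g => ∀ i : ℕ, f (m + i) = g (n + i)
  | _, _ => False

/-- The graph groupoid `G_E = {(αx, |α| − |β|, βx)}`, as triples `(x, k, y)` of
boundary paths `x, y` having a common tail, with `k` the difference of the lengths of
the removed prefixes.  Here `r (x,k,y) = x` and `d (x,k,y) = y`; composition is
`(x,k,y)(y,l,z) = (x,k+l,z)` and inversion `(x,k,y)⁻¹ = (y,−k,x)`. -/
def GrGpd := {γ : BPath gs gr × ℤ × BPath gs gr //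
  ∃ m n : ℕ, AgreeFrom gs gr m n γ.1 γ.2.2 ∧ γ.2.1 = (m : ℤ) - (n : ℤ)}

/-- The basic bisection `Z(μ, ν) = {(μz, |μ|−|ν|, νz)}` of the graph groupoid. -/
def ZZ (u : V) (p : List E) (w : V) (q : List E) : Set (GrGpd gs gr) :=
  {γ | HasPrefixP gs gr u p γ.1.1 ∧ HasPrefixP gs gr w q γ.1.2.2 ∧
    γ.1.2.1 = (p.length : ℤ) - (q.length : ℤ) ∧
    AgreeFrom gs gr p.length q.length γ.1.1 γ.1.2.2}

/-- The topology of the graph groupoid `G_E`, with basic compact open bisections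
`Z((μ,ν)∖F) = Z(μ,ν) ∖ ⋃_{α ∈ F} Z(μα, να)`, making it a Hausdorff ample groupoid. -/
def gpdTop : TopologicalSpace (GrGpd gs gr) :=
  TopologicalSpace.generateFrom
    {A | ∃ (u : V) (p : List E) (w : V) (q : List E) (F : Set (List E)), F.Finite ∧
      IsPathL gs gr u p ∧ IsPathL gs gr w q ∧ pathRng gr u p = pathRng gr w q ∧
      (∀ α ∈ F, IsPathL gs gr (pathRng gr u p) α) ∧
      A = ZZ gs gr u p w q \ ⋃ α ∈ F, ZZ gs gr u (p ++ α) w (q ++ α)}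

/-- A cycle: a nonempty closed path whose edges have pairwise distinct sources. -/
def IsCycleP (v : V) (l : List E) : Prop :=
  IsPathL gs gr v l ∧ l ≠ [] ∧ pathRng gr v l = v ∧ (l.map gs).Nodup

/-- The path `l` has an exit: some edge `e` shares its source with an edge of `l` but
differs from it. -/
def HasExitP (l : List E) : Prop := ∃ e a : E, a ∈ l ∧ gs e = gs a ∧ e ≠ a

end Graph

/-!
Every vertex starts a boundary path (follow edges until reaching a vertex that is not
regular, or forever), and so does every edge; hence a finite boundary path space forces
finitely many vertices and edges. A cycle `l₁ a l₂` with an exit `e` at `a` gives the paths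
`(l₁ a l₂)ⁿ l₁ e`, which extend to pairwise distinct boundary paths.

Conversely, if no cycle has an exit, a vertex on a cycle emits exactly one edge, and its
range is on the same cycle, so a path that meets a cycle is trapped on it. A path that
repeats a vertex meets a cycle. Hence a finite boundary path, ending at a non-regular vertex,
repeats no edge, and an infinite one is determined by its first `|E| + 1` edges: a boundary
path is determined by its source and its first `|E| + 1` edges.
-/

lemma List.exists_eq_append_cons_append_cons_of_not_nodup_map {α β : Type*} {f : α → β}
    {l : List α} (h : ¬ (l.map f).Nodup) :
    ∃ p a r b q, l = p ++ a :: (r ++ b :: q) ∧ f a = f b := by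
  induction l with
  | nil => simp at h
  | cons c l ih =>
    rw [List.map_cons, List.nodup_cons, not_and_or, not_not] at h
    rcases h with h | h
    · obtain ⟨b, hb, hfb⟩ := List.exists_of_mem_map h
      obtain ⟨r, q, rfl⟩ := List.append_of_mem hb
      exact ⟨[], c, r, b, q, rfl, hfb.symm⟩
    · obtain ⟨p, a, r, b, q, rfl, hab⟩ := ih h
      exact ⟨c :: p, a, r, b, q, rfl, hab⟩

section Paths

variable {V E : Type*} {gs gr : E → V}

@[simp] lemma pathRng_nil (v : V) : pathRng gr v ([] : List E) = v := rfl

@[simp] lemma pathRng_cons (v : V) (e : E) (l : List E) :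
    pathRng gr v (e :: l) = pathRng gr (gr e) l := rfl

lemma pathRng_append (v : V) (p q : List E) :
    pathRng gr v (p ++ q) = pathRng gr (pathRng gr v p) q :=
  List.foldl_append

lemma pathRng_concat (v : V) (p : List E) (e : E) : pathRng gr v (p ++ [e]) = gr e := by
  rw [pathRng_append, pathRng_cons, pathRng_nil]

lemma isPathL_nil (v : V) : IsPathL gs gr v [] :=
  ⟨by simp, List.isChain_nil⟩

lemma isPathL_cons {v : V} {e : E} {l : List E} :
    IsPathL gs gr v (e :: l) ↔ gs e = v ∧ IsPathL gs gr (gr e) l := by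
  simp only [IsPathL, List.head?_cons, Option.mem_def, Option.some.injEq, forall_eq']
  exact and_congr_right fun _ =>
    List.isChain_cons.trans (and_congr_left' (forall₂_congr fun _ _ => eq_comm))

lemma isPathL_append {v : V} {p q : List E} :
    IsPathL gs gr v (p ++ q) ↔ IsPathL gs gr v p ∧ IsPathL gs gr (pathRng gr v p) q := by
  induction p generalizing v with
  | nil => simp [isPathL_nil]
  | cons e p ih => simp only [List.cons_append, isPathL_cons, ih, pathRng_cons, and_assoc]

lemma IsPathL.pathRng_eq_of_append_cons {v : V} {p q : List E} {e : E}
    (h : IsPathL gs gr v (p ++ e :: q)) : pathRng gr v p = gs e :=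
  (isPathL_cons.mp (isPathL_append.mp h).2).1.symm

lemma pathRng_flatten_replicate {v : V} {l : List E} (hc : pathRng gr v l = v) (n : ℕ) :
    pathRng gr v (List.replicate n l).flatten = v := by
  induction n with
  | zero => rfl
  | succ n ih => rw [List.replicate_succ, List.flatten_cons, pathRng_append, hc, ih]

lemma IsPathL.flatten_replicate {v : V} {l : List E} (h : IsPathL gs gr v l)
    (hc : pathRng gr v l = v) (n : ℕ) : IsPathL gs gr v (List.replicate n l).flatten := by
  induction n with
  | zero => exact isPathL_nil v
  | succ n ih =>
    rw [List.replicate_succ, List.flatten_cons, isPathL_append, hc]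
    exact ⟨h, ih⟩

lemma isPathL_map_range {f : ℕ → E} (hf : ∀ n, gr (f n) = gs (f (n + 1))) (n : ℕ) :
    IsPathL gs gr (gs (f 0)) ((List.range n).map f) ∧
      pathRng gr (gs (f 0)) ((List.range n).map f) = gs (f n) := by
  induction n with
  | zero => exact ⟨isPathL_nil _, rfl⟩
  | succ n ih =>
    simp only [List.range_succ, List.map_append, List.map_cons, List.map_nil, isPathL_append,
      pathRng_append, ih.2, isPathL_cons, pathRng_cons, pathRng_nil]
    exact ⟨⟨ih.1, trivial, isPathL_nil _⟩, hf n⟩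

lemma exists_infinite_path {S : Set V} (hS : ∀ u ∈ S, ∃ e, gs e = u ∧ gr e ∈ S) {v : V}
    (hv : v ∈ S) : ∃ f : ℕ → E, gs (f 0) = v ∧ ∀ n, gr (f n) = gs (f (n + 1)) := by
  have : Nonempty E := ⟨(hS v hv).choose⟩
  choose! next hnext_src hnext_mem using hS
  let w : ℕ → V := fun n => (gr ∘ next)^[n] v
  have hw_succ : ∀ n, w (n + 1) = gr (next (w n)) := fun n => Function.iterate_succ_apply' _ _ _
  have hw : ∀ n, w n ∈ S := fun n => by
    induction n with
    | zero => exact hv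
    | succ n ih => rw [hw_succ]; exact hnext_mem _ ih
  refine ⟨next ∘ w, hnext_src v hv, fun n => ?_⟩
  rw [Function.comp_apply, Function.comp_apply, hnext_src _ (hw (n + 1)), hw_succ]

end Paths

namespace BPath

variable {V E : Type*} {gs gr : E → V}

def src (x : BPath gs gr) : V :=
  match x.1 with
  | .inl (v, _) => v
  | .inr f => gs (f 0)

def edge (x : BPath gs gr) (k : ℕ) : Option E :=
  match x.1 with
  | .inl (_, l) => l[k]?
  | .inr f => some (f k)

lemma exists_src_eq (v : V) : ∃ x : BPath gs gr, x.src = v := by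
  by_cases h : ∃ q, IsPathL gs gr v q ∧ ¬ RegularVert gs (pathRng gr v q)
  · obtain ⟨q, hq⟩ := h
    exact ⟨⟨.inl (v, q), hq⟩, rfl⟩
  · push Not at h
    let reach : Set V := {u | ∃ q, IsPathL gs gr v q ∧ pathRng gr v q = u}
    have hreach : ∀ u ∈ reach, ∃ e, gs e = u ∧ gr e ∈ reach := by
      rintro _ ⟨q, hq, rfl⟩
      obtain ⟨e, he⟩ := (h q hq).2
      exact ⟨e, he, q ++ [e], isPathL_append.mpr ⟨hq, isPathL_cons.mpr ⟨he, isPathL_nil _⟩⟩,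
        by rw [pathRng_append]; rfl⟩
    obtain ⟨f, hf0, hf⟩ := exists_infinite_path hreach ⟨[], isPathL_nil v, rfl⟩
    exact ⟨⟨.inr f, hf⟩, hf0⟩

lemma exists_cons {e : E} {y : BPath gs gr} (hy : y.src = gr e) :
    ∃ x : BPath gs gr, x.src = gs e ∧ x.edge 0 = some e ∧ ∀ k, x.edge (k + 1) = y.edge k := by
  obtain ⟨⟨w, l⟩ | f, hb⟩ := y
  · obtain rfl : w = gr e := hy
    exact ⟨⟨.inl (gs e, e :: l), isPathL_cons.mpr ⟨rfl, hb.1⟩, hb.2⟩, rfl, rfl, fun _ => rfl⟩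
  · let g : ℕ → E := fun n => match n with | 0 => e | n + 1 => f n
    have hg : IsBoundary gs gr (.inr g) := fun n => by
      cases n with
      | zero => exact hy.symm
      | succ n => exact hb n
    exact ⟨⟨.inr g, hg⟩, rfl, rfl, fun _ => rfl⟩

lemma exists_edge_eq_of_isPathL {v : V} {p : List E} (hp : IsPathL gs gr v p) :
    ∃ x : BPath gs gr, x.src = v ∧ ∀ k (hk : k < p.length), x.edge k = some p[k] := by
  induction p generalizing v with
  | nil => simpa using exists_src_eq v
  | cons e p ih =>
    obtain ⟨rfl, hp'⟩ := isPathL_cons.mp hp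
    obtain ⟨y, hy, hyp⟩ := ih hp'
    obtain ⟨x, hx, hx0, hxs⟩ := exists_cons hy
    refine ⟨x, hx, fun k hk => ?_⟩
    cases k with
    | zero => exact hx0
    | succ k => rw [hxs, hyp k (by simpa using hk), List.getElem_cons_succ]

end BPath

section Exits

variable {V E : Type*} (gs gr : E → V)

def NoCycleHasExit : Prop := ∀ (v : V) (l : List E), IsCycleP gs gr v l → ¬ HasExitP gs l

lemma finite_edges_of_finite_bPath [Finite (BPath gs gr)] : Finite E := by
  choose x _ hx using fun e : E =>
    BPath.exists_edge_eq_of_isPathL (isPathL_cons.mpr ⟨rfl, isPathL_nil (gr e)⟩ :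
      IsPathL gs gr (gs e) [e])
  have hx0 : ∀ e, (x e).edge 0 = some e := fun e => hx e 0 (by simp)
  exact Finite.of_injective x fun e e' h => Option.some.inj (by rw [← hx0 e, ← hx0 e', h])

variable {gs gr}

lemma infinite_of_isCycleP_of_hasExitP {v : V} {l : List E} (hc : IsCycleP gs gr v l)
    (hx : HasExitP gs l) : Infinite (BPath gs gr) := by
  obtain ⟨e, a, ha, hea, hne⟩ := hx
  obtain ⟨l₁, l₂, rfl⟩ := List.append_of_mem ha
  let loop n := (List.replicate n (l₁ ++ a :: l₂)).flatten
  have hpath : ∀ n, IsPathL gs gr v (loop n ++ l₁ ++ [e]) := fun n => by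
    rw [isPathL_append, isPathL_append, pathRng_append, pathRng_flatten_replicate hc.2.2.1]
    exact ⟨⟨hc.1.flatten_replicate hc.2.2.1 n, (isPathL_append.mp hc.1).1⟩,
      isPathL_cons.mpr ⟨hea.trans hc.1.pathRng_eq_of_append_cons.symm, isPathL_nil _⟩⟩
  choose x _ hx using fun n => BPath.exists_edge_eq_of_isPathL (hpath n)
  have hx_exit : ∀ n, (x n).edge (loop n ++ l₁).length = some e := fun n => by
    rw [hx n _ (by simp)]
    simp
  have hx_cycle : ∀ n d, (x (n + d + 1)).edge (loop n ++ l₁).length = some a := fun n d => by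
    have hsplit : loop (n + d + 1) ++ l₁ ++ [e] =
        loop n ++ l₁ ++ a :: (l₂ ++ loop d ++ l₁ ++ [e]) := by
      simp only [loop, Nat.add_assoc, ← List.replicate_append_replicate, List.replicate_succ,
        List.flatten_append, List.flatten_cons, List.append_assoc, List.cons_append]
    rw [hx _ _ (by simp [hsplit]), List.getElem_of_eq hsplit]
    simp
  refine Infinite.of_injective x (Function.Injective.of_lt_imp_ne fun n m hnm hx_eq => hne ?_)
  obtain ⟨d, rfl⟩ := Nat.exists_eq_add_of_lt hnm
  have h := hx_exit n
  rw [hx_eq, hx_cycle] at h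
  exact (Option.some.inj h).symm

lemma noCycleHasExit_of_finite [Finite (BPath gs gr)] : NoCycleHasExit gs gr :=
  fun _ _ hc hx => (infinite_of_isCycleP_of_hasExitP hc hx).not_finite ‹_›

end Exits

section Cycles

variable {V E : Type*} (gs gr : E → V)

def OnCycle (v : V) : Prop := ∃ w l, IsCycleP gs gr w l ∧ v ∈ l.map gs

variable {gs gr}

lemma IsCycleP.range_mem_map_src {w : V} {l : List E} (hc : IsCycleP gs gr w l) {a : E}
    (ha : a ∈ l) : gr a ∈ l.map gs := by
  obtain ⟨s, t, rfl⟩ := List.append_of_mem ha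
  cases t with
  | cons b t =>
    have hab : pathRng gr w (s ++ [a]) = gs b :=
      IsPathL.pathRng_eq_of_append_cons (by simpa using hc.1)
    rw [pathRng_concat] at hab
    exact List.mem_map.mpr ⟨b, by simp, hab.symm⟩
  | nil =>
    obtain ⟨c, l', hl⟩ := List.exists_cons_of_ne_nil hc.2.1
    have hc_src : gs c = w := (isPathL_cons.mp (hl ▸ hc.1)).1
    have ha_rng : gr a = w := (pathRng_concat w s a).symm.trans hc.2.2.1
    exact List.mem_map.mpr ⟨c, hl ▸ List.mem_cons_self, hc_src.trans ha_rng.symm⟩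

lemma OnCycle.exists_src_eq {v : V} (h : OnCycle gs gr v) : ∃ e, gs e = v := by
  obtain ⟨_, _, _, hv⟩ := h
  obtain ⟨a, -, ha⟩ := List.exists_of_mem_map hv
  exact ⟨a, ha⟩

lemma OnCycle.eq_of_src_eq (hE : NoCycleHasExit gs gr) {v : V} (h : OnCycle gs gr v) {e e' : E}
    (he : gs e = v) (he' : gs e' = v) : e = e' := by
  obtain ⟨w, l, hc, hv⟩ := h
  obtain ⟨a, ha, hav⟩ := List.exists_of_mem_map hv
  by_contra hne
  rcases eq_or_ne e a with rfl | hea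
  · exact hE w l hc ⟨e', e, ha, he'.trans hav.symm, Ne.symm hne⟩
  · exact hE w l hc ⟨e, a, ha, he.trans hav.symm, hea⟩

lemma OnCycle.range (hE : NoCycleHasExit gs gr) {e : E} (h : OnCycle gs gr (gs e)) :
    OnCycle gs gr (gr e) := by
  obtain ⟨w, l, hc, hv⟩ := h
  obtain ⟨a, ha, hae⟩ := List.exists_of_mem_map hv
  obtain rfl : e = a := OnCycle.eq_of_src_eq hE ⟨w, l, hc, hv⟩ rfl hae
  exact ⟨w, l, hc, hc.range_mem_map_src ha⟩

lemma OnCycle.pathRng (hE : NoCycleHasExit gs gr) {v : V} (h : OnCycle gs gr v) {p : List E}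
    (hp : IsPathL gs gr v p) : OnCycle gs gr (pathRng gr v p) := by
  induction p generalizing v with
  | nil => exact h
  | cons e p ih =>
    obtain ⟨rfl, hp'⟩ := isPathL_cons.mp hp
    exact ih (h.range hE) hp'

/-- A repeated vertex along a path closes a loop; a shortest such loop is a cycle. -/
lemma exists_onCycle_of_not_nodup {v : V} {l : List E} (hp : IsPathL gs gr v l)
    (hl : ¬ (l.map gs).Nodup) : ∃ a ∈ l, OnCycle gs gr (gs a) := by
  induction hlen : l.length using Nat.strong_induction_on generalizing v l with
  | _ n ih =>
  obtain ⟨p, a, r, b, q, rfl, hab⟩ := List.exists_eq_append_cons_append_cons_of_not_nodup_map hl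
  have hloop : IsPathL gs gr (gs a) ((a :: r) ++ b :: q) :=
    isPathL_cons.mpr ⟨rfl, (isPathL_cons.mp (isPathL_append.mp hp).2).2⟩
  have hpath : IsPathL gs gr (gs a) (a :: r) := (isPathL_append.mp hloop).1
  by_cases hnd : ((a :: r).map gs).Nodup
  · have hclosed : pathRng gr (gs a) (a :: r) = gs a :=
      hloop.pathRng_eq_of_append_cons.trans hab.symm
    exact ⟨a, by simp, gs a, a :: r, ⟨hpath, List.cons_ne_nil _ _, hclosed, hnd⟩, by simp⟩
  · obtain ⟨c, hc, hcyc⟩ := ih _ (by simp [← hlen]; omega) hpath hnd rfl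
    refine ⟨c, ?_, hcyc⟩
    simp only [List.mem_append, List.mem_cons] at hc ⊢
    tauto

lemma nodup_of_isBoundary_inl [Finite E] (hE : NoCycleHasExit gs gr) {v : V} {l : List E}
    (hb : IsBoundary gs gr (.inl (v, l))) : l.Nodup := by
  refine List.Nodup.of_map gs (not_not.mp fun hl => ?_)
  obtain ⟨a, ha, hcyc⟩ := exists_onCycle_of_not_nodup hb.1 hl
  obtain ⟨s, t, rfl⟩ := List.append_of_mem ha
  have hrng : OnCycle gs gr (pathRng gr v (s ++ a :: t)) := by
    rw [pathRng_append, pathRng_cons]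
    exact (hcyc.range hE).pathRng hE (isPathL_cons.mp (isPathL_append.mp hb.1).2).2
  exact hb.2 ⟨Set.toFinite _, hrng.exists_src_eq⟩

lemma eq_of_onCycle (hE : NoCycleHasExit gs gr) {f g : ℕ → E}
    (hf : ∀ n, gr (f n) = gs (f (n + 1))) (hg : ∀ n, gr (g n) = gs (g (n + 1))) {t : ℕ}
    (hc : OnCycle gs gr (gs (f t))) (ht : f t = g t) : ∀ n, t ≤ n → f n = g n := by
  have hcyc : ∀ n, t ≤ n → OnCycle gs gr (gs (f n)) :=
    Nat.le_induction hc fun n _ ih => hf n ▸ ih.range hE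
  refine Nat.le_induction ht fun n hn ih => ?_
  exact (hcyc (n + 1) (by omega)).eq_of_src_eq hE rfl (by rw [← hg n, ← ih, hf n])

lemma eq_of_forall_le_card [Fintype E] (hE : NoCycleHasExit gs gr) {f g : ℕ → E}
    (hf : ∀ n, gr (f n) = gs (f (n + 1))) (hg : ∀ n, gr (g n) = gs (g (n + 1)))
    (h : ∀ n ≤ Fintype.card E, f n = g n) : f = g := by
  have hnd : ¬ (((List.range (Fintype.card E + 1)).map f).map gs).Nodup := fun hnd => by
    simpa using (hnd.of_map gs).length_le_card
  obtain ⟨a, ha, hcyc⟩ := exists_onCycle_of_not_nodup (isPathL_map_range hf _).1 hnd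
  obtain ⟨t, ht, rfl⟩ := List.mem_map.mp ha
  have ht : t ≤ Fintype.card E := Nat.lt_succ_iff.mp (List.mem_range.mp ht)
  funext n
  rcases le_total n t with hn | hn
  · exact h n (hn.trans ht)
  · exact eq_of_onCycle hE hf hg hcyc (h t ht) n hn


lemma BPath.eq_of_src_eq_of_edge_eq [Fintype E] (hE : NoCycleHasExit gs gr) {x y : BPath gs gr}
    (hsrc : x.src = y.src) (hedge : ∀ k ≤ Fintype.card E, x.edge k = y.edge k) : x = y := by
  obtain ⟨⟨v, l⟩ | f, hx⟩ := x <;> obtain ⟨⟨w, m⟩ | g, hy⟩ := y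
  · have hl := (nodup_of_isBoundary_inl hE hx).length_le_card
    have hm := (nodup_of_isBoundary_inl hE hy).length_le_card
    obtain rfl : v = w := hsrc
    obtain rfl : l = m := List.ext_getElem? fun k => by
      rcases le_or_gt k (Fintype.card E) with hk | hk
      · exact hedge k hk
      · rw [List.getElem?_eq_none (by omega), List.getElem?_eq_none (by omega)]
    rfl
  · have hl := (nodup_of_isBoundary_inl hE hx).length_le_card
    simpa [BPath.edge, List.getElem?_eq_none hl] using hedge _ le_rfl
  · have hm := (nodup_of_isBoundary_inl hE hy).length_le_card
    simpa [BPath.edge, List.getElem?_eq_none hm] using hedge _ le_rfl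
  · obtain rfl : f = g := eq_of_forall_le_card hE hx hy fun n hn => Option.some.inj (hedge n hn)
    rfl

lemma finite_of_noCycleHasExit [Finite V] [Finite E] (hE : NoCycleHasExit gs gr) :
    Finite (BPath gs gr) := by
  cases nonempty_fintype E
  refine Finite.of_injective
    (fun x : BPath gs gr => (x.src, fun k : Fin (Fintype.card E + 1) => x.edge k))
    fun x y hxy => BPath.eq_of_src_eq_of_edge_eq hE (congrArg Prod.fst hxy) fun k hk => ?_
  exact congrFun (congrArg Prod.snd hxy) ⟨k, Nat.lt_succ_of_le hk⟩

end Cycles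

/-- The unit space `G_E⁰` (the boundary path space `X`) of the graph
groupoid of a directed graph `E` is finite if and only if `E` is a finite graph with
no cycle having an exit. -/
theorem boundary_path_space_finite_iff {V E : Type*} (gs gr : E → V) :
    Finite (BPath gs gr) ↔
      (Finite V ∧ Finite E ∧ ∀ (v : V) (l : List E), IsCycleP gs gr v l →
        ¬ HasExitP gs l) := by
  constructor
  · intro _
    exact ⟨Finite.of_surjective (BPath.src : BPath gs gr → V) BPath.exists_src_eq,
      finite_edges_of_finite_bPath gs gr, noCycleHasExit_of_finite⟩
  · rintro ⟨_, _, hE⟩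
    exact finite_of_noCycleHasExit hE
end

section
/- Let G be a group with identity ε, and let S(G) be the semigroup generated by symbols [g], g∈G, subject to the relations (i) [g⁻¹][g][h]=[g⁻¹][gh], (ii) [g][h][h⁻¹]=[gh][h⁻¹], (iii) [g][ε]=[g], for all g,h∈G. Then S(G) is an inverse semigroup (every x∈S(G) has a unique element x* with xx*x=x and x*xx*=x*), with unit [ε], and every element x∈S(G) admits a decomposition x=[t₁][t₁⁻¹]⋯[t_r][t_r⁻¹][g] with r≥0, the elements t₁,…,t_r∈G distinct and different from ε and from g, and this decomposition is unique up to the order of the factors [tᵢ][tᵢ⁻¹]. -/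
open FreeSemigroup

/-- The defining relations of Exel's semigroup `S(G)`:
(i) `[g⁻¹][g][h] = [g⁻¹][gh]`, (ii) `[g][h][h⁻¹] = [gh][h⁻¹]`, (iii) `[g][ε] = [g]`. -/
def exelRel (G : Type*) [Group G] : FreeSemigroup G → FreeSemigroup G → Prop :=
  fun a b =>
    (∃ g h : G, a = of g⁻¹ * of g * of h ∧ b = of g⁻¹ * of (g * h)) ∨
    (∃ g h : G, a = of g * of h * of h⁻¹ ∧ b = of (g * h) * of h⁻¹) ∨
    (∃ g : G, a = of g * of (1 : G) ∧ b = of g)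

/-- Exel's semigroup `S(G)`: the quotient of the free semigroup on the symbols `[g]`,
`g ∈ G`, by the congruence generated by the relations (i)–(iii). -/
def ExelSgp (G : Type*) [Group G] := (conGen (exelRel G)).Quotient

instance (G : Type*) [Group G] : Semigroup (ExelSgp G) :=
  inferInstanceAs (Semigroup (conGen (exelRel G)).Quotient)

/-- The generator `[g]` of `S(G)`. -/
def exelGen {G : Type*} [Group G] (g : G) : ExelSgp G :=
  ((of g : FreeSemigroup G) : (conGen (exelRel G)).Quotient)

/-- The standard form `[t₁][t₁⁻¹] ⋯ [t_r][t_r⁻¹][g]` of an element of `S(G)`. -/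
def exelForm {G : Type*} [Group G] (l : List G) (g : G) : ExelSgp G :=
  l.foldr (fun t acc => exelGen t * exelGen t⁻¹ * acc) (exelGen g)

namespace ExelAux
variable {G : Type*} [Group G]

/-- coercion from the free semigroup -/
def emk (a : FreeSemigroup G) : ExelSgp G := (a : (conGen (exelRel G)).Quotient)

lemma emk_mul (a b : FreeSemigroup G) : emk (a * b) = emk a * emk b := rfl

lemma emk_of (g : G) : emk (of g) = exelGen g := rfl

lemma emk_rel {a b : FreeSemigroup G} (h : exelRel G a b) : emk a = emk b :=
  (Con.eq _).2 (ConGen.Rel.of _ _ h)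

lemma rel1 (g h : G) :
    exelGen (G := G) g⁻¹ * exelGen g * exelGen h = exelGen g⁻¹ * exelGen (g * h) := by
  have := emk_rel (G := G) (Or.inl ⟨g, h, rfl, rfl⟩)
  simpa [emk_mul, emk_of] using this

lemma rel2 (g h : G) :
    exelGen g * exelGen h * exelGen h⁻¹ = exelGen (g * h) * exelGen (G := G) h⁻¹ := by
  have := emk_rel (G := G) (Or.inr (Or.inl ⟨g, h, rfl, rfl⟩))
  simpa [emk_mul, emk_of] using this

lemma rel3 (g : G) : exelGen g * exelGen (1 : G) = exelGen g := by
  have := emk_rel (G := G) (Or.inr (Or.inr ⟨g, rfl, rfl⟩))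
  simpa [emk_mul, emk_of] using this

lemma rel1' (g h : G) :
    exelGen g * exelGen g⁻¹ * exelGen h = exelGen g * exelGen (g⁻¹ * h) := by
  simpa using rel1 g⁻¹ h

lemma ggg (g : G) : exelGen g * exelGen g⁻¹ * exelGen g = exelGen g := by
  rw [rel1' g g, inv_mul_cancel, rel3]

lemma gen_mul (g h : G) :
    exelGen g * exelGen h = exelGen g * exelGen g⁻¹ * exelGen (g * h) := by
  rw [rel1' g (g * h), inv_mul_cancel_left]

lemma one_mul_gen (a : G) : exelGen (1 : G) * exelGen a = exelGen a := by
  have h1 : exelGen (1 : G) * exelGen a * exelGen a⁻¹ = exelGen a * exelGen a⁻¹ := by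
    simpa using rel2 (1 : G) a
  calc exelGen (1 : G) * exelGen a
      = exelGen (1:G) * (exelGen a * exelGen a⁻¹ * exelGen a) := by rw [ggg]
    _ = (exelGen (1:G) * exelGen a * exelGen a⁻¹) * exelGen a := by
        simp [mul_assoc]
    _ = exelGen a * exelGen a⁻¹ * exelGen a := by rw [h1]
    _ = exelGen a := ggg a

/-- `ε_t = [t][t⁻¹]` -/
def eps (t : G) : ExelSgp G := exelGen t * exelGen t⁻¹

lemma gen_eps (g t : G) : exelGen g * eps t = eps (g * t) * exelGen g := by
  have h1 : exelGen g * eps t = exelGen (g * t) * exelGen t⁻¹ := by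
    rw [eps, ← mul_assoc, rel2]
  have h2 : exelGen (g * t) * exelGen (g * t)⁻¹ * exelGen g
      = exelGen (g * t) * exelGen t⁻¹ := by
    rw [rel1' (g * t) g]
    congr 1
    group
  rw [h1, eps, ← h2]

lemma eps_comm (s t : G) : eps s * eps t = eps t * eps s := by
  have h1 : exelGen s⁻¹ * eps t = eps (s⁻¹ * t) * exelGen s⁻¹ := gen_eps s⁻¹ t
  have h2 : exelGen s * eps (s⁻¹ * t) = eps t * exelGen s := by
    simpa using gen_eps s (s⁻¹ * t)
  calc eps s * eps t = exelGen s * (exelGen s⁻¹ * eps t) := by rw [eps, mul_assoc]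
    _ = exelGen s * (eps (s⁻¹ * t) * exelGen s⁻¹) := by rw [h1]
    _ = (exelGen s * eps (s⁻¹ * t)) * exelGen s⁻¹ := by rw [mul_assoc]
    _ = (eps t * exelGen s) * exelGen s⁻¹ := by rw [h2]
    _ = eps t * eps s := by rw [eps, mul_assoc]; rfl

lemma eps_idem (t : G) : eps t * eps t = eps t := by
  show exelGen t * exelGen t⁻¹ * (exelGen t * exelGen t⁻¹) = eps t
  rw [← mul_assoc, ggg]; rfl

lemma eps_one : eps (1 : G) = exelGen 1 := by
  rw [eps, inv_one, rel3]

lemma eps_gen_self (g : G) : eps g * exelGen g = exelGen g := ggg g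

lemma form_nil (g : G) : exelForm ([] : List G) g = exelGen g := rfl

lemma form_cons (t : G) (l : List G) (g : G) :
    exelForm (t :: l) g = eps t * exelForm l g := rfl

lemma form_perm {l l' : List G} (h : l.Perm l') (g : G) :
    exelForm l g = exelForm l' g := by
  induction h with
  | nil => rfl
  | cons t _ ih => rw [form_cons, form_cons, ih]
  | swap a b l =>
      rw [form_cons, form_cons, form_cons, form_cons, ← mul_assoc, ← mul_assoc,
        eps_comm]
  | trans _ _ ih1 ih2 => rw [ih1, ih2]

lemma mem_eps_absorb {t : G} {l : List G} (h : t ∈ l) (g : G) :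
    eps t * exelForm l g = exelForm l g := by
  induction l with
  | nil => simp at h
  | cons s l ih =>
      rcases List.mem_cons.1 h with rfl | hm
      · rw [form_cons, ← mul_assoc, eps_idem]
      · rw [form_cons, ← mul_assoc, eps_comm, mul_assoc, ih hm]

lemma eps_g_form (l : List G) (g : G) : eps g * exelForm l g = exelForm l g := by
  induction l with
  | nil => exact eps_gen_self g
  | cons s l ih => rw [form_cons, ← mul_assoc, eps_comm, mul_assoc, ih]

lemma one_mul_any (x : ExelSgp G) : exelGen (1 : G) * x = x := by
  induction x using Con.induction_on with
  | H w =>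
      induction w using FreeSemigroup.recOnMul with
      | ih1 a => exact one_mul_gen a
      | ih2 a y _ hy =>
          show exelGen 1 * (emk (of a * y)) = emk (of a * y)
          rw [emk_mul, ← mul_assoc]
          exact congrArg (· * emk y) (one_mul_gen a)

lemma any_mul_one (x : ExelSgp G) : x * exelGen (1 : G) = x := by
  induction x using Con.induction_on with
  | H w =>
      induction w using FreeSemigroup.recOnMul with
      | ih1 a => exact rel3 a
      | ih2 a y _ hy =>
          show (emk (of a * y)) * exelGen 1 = emk (of a * y)
          rw [emk_mul, mul_assoc]
          exact congrArg (emk (of a) * ·) hy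

lemma gen_mul_form (a : G) (l : List G) (g : G) :
    exelGen a * exelForm l g = exelForm (l.map (a * ·) ++ [a]) (a * g) := by
  induction l with
  | nil =>
      show exelGen a * exelGen g = exelForm [a] (a * g)
      rw [gen_mul a g]
      rfl
  | cons t l ih =>
      rw [form_cons, ← mul_assoc, gen_eps, mul_assoc, ih]
      rfl

lemma form_append (l m : List G) (g : G) :
    exelForm (l ++ m) g = l.foldr (fun t acc => exelGen t * exelGen t⁻¹ * acc) (exelForm m g) := by
  simp [exelForm, List.foldr_append]

lemma form_mul (l l' : List G) (g g' : G) :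
    exelForm l g * exelForm l' g' = exelForm (l ++ (l'.map (g * ·) ++ [g])) (g * g') := by
  induction l with
  | nil => simpa [form_nil] using gen_mul_form g l' g'
  | cons t l ih =>
      rw [form_cons, mul_assoc, ih]
      rfl

lemma exists_form (x : ExelSgp G) : ∃ (l : List G) (g : G), x = exelForm l g := by
  induction x using Con.induction_on with
  | H w =>
      induction w using FreeSemigroup.recOnMul with
      | ih1 a => exact ⟨[], a, rfl⟩
      | ih2 a y _ hy =>
          obtain ⟨l, g, hl⟩ := hy
          refine ⟨l.map (a * ·) ++ [a], a * g, ?_⟩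
          show emk (of a * y) = _
          rw [emk_mul, emk_of]
          rw [show (emk y : ExelSgp G) = exelForm l g from hl]
          exact gen_mul_form a l g

lemma form_dedup [DecidableEq G] (l : List G) (g : G) :
    exelForm l g = exelForm l.dedup g := by
  induction l with
  | nil => rfl
  | cons t l ih =>
      by_cases h : t ∈ l
      · rw [List.dedup_cons_of_mem h, form_cons, ih,
          mem_eps_absorb (by rwa [List.mem_dedup]) g]
      · rw [List.dedup_cons_of_notMem h, form_cons, form_cons, ih]

lemma form_filter (l : List G) (g : G) (p : G → Bool)
    (hp : ∀ t, ¬ p t → t = 1 ∨ t = g) :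
    exelForm l g = exelForm (l.filter p) g := by
  induction l with
  | nil => rfl
  | cons t l ih =>
      by_cases h : p t
      · rw [List.filter_cons_of_pos h, form_cons, form_cons, ih]
      · rw [List.filter_cons_of_neg h, form_cons, ih]
        rcases hp t h with rfl | rfl
        · rw [eps_one, one_mul_any]
        · exact eps_g_form _ _

lemma exists_std_form (x : ExelSgp G) :
    ∃ (l : List G) (g : G), l.Nodup ∧ (1 : G) ∉ l ∧ g ∉ l ∧ x = exelForm l g := by
  classical
  obtain ⟨l, g, hl⟩ := exists_form x
  refine ⟨l.dedup.filter (fun t => t ≠ 1 ∧ t ≠ g), g, ?_, ?_, ?_, ?_⟩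
  · exact (l.nodup_dedup).filter _
  · simp
  · simp
  · rw [hl, form_dedup]
    refine form_filter _ g _ ?_
    intro t ht
    by_cases h1 : t = 1
    · exact Or.inl h1
    · by_cases h2 : t = g
      · exact Or.inr h2
      · exact absurd (by simp [h1, h2]) ht

variable (G) in
/-- The concrete model: pairs `(A, g)` with `A` a finite subset containing `1` and `g`. -/
def T [DecidableEq G] := {p : Finset G × G // (1 : G) ∈ p.1 ∧ p.2 ∈ p.1}

variable [DecidableEq G]

instance : Semigroup (T G) where
  mul x y := ⟨(x.1.1 ∪ y.1.1.image (x.1.2 * ·), x.1.2 * y.1.2),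
    Finset.mem_union_left _ x.2.1,
    Finset.mem_union_right _ (Finset.mem_image_of_mem _ y.2.2)⟩
  mul_assoc a b c := by
    apply Subtype.ext
    apply Prod.ext
    · show (a.1.1 ∪ b.1.1.image (a.1.2 * ·)) ∪ (c.1.1.image ((a.1.2 * b.1.2) * ·)) =
        a.1.1 ∪ (b.1.1 ∪ c.1.1.image (b.1.2 * ·)).image (a.1.2 * ·)
      rw [Finset.image_union, Finset.image_image, Finset.union_assoc]
      congr 2
      ext t
      simp [mul_assoc]
    · exact mul_assoc a.1.2 b.1.2 c.1.2

lemma T_mul_fst (x y : T G) : (x * y).1.1 = x.1.1 ∪ y.1.1.image (x.1.2 * ·) := rfl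
lemma T_mul_snd (x y : T G) : (x * y).1.2 = x.1.2 * y.1.2 := rfl

/-- The generator of the model. -/
def τ (g : G) : T G := ⟨({1, g}, g), by simp, by simp⟩

/-- The lifted hom on the free semigroup. -/
def Φ : FreeSemigroup G →ₙ* T G := FreeSemigroup.lift τ

lemma Φ_of (g : G) : Φ (of g) = τ g := FreeSemigroup.lift_of τ g

lemma Φ_rel : ∀ a b : FreeSemigroup G, exelRel G a b → Φ a = Φ b := by
  rintro a b (⟨g, h, rfl, rfl⟩ | ⟨g, h, rfl, rfl⟩ | ⟨g, rfl, rfl⟩) <;>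
    · apply Subtype.ext
      apply Prod.ext
      · show _ = _
        simp only [map_mul, Φ_of]
        simp only [T_mul_fst, T_mul_snd]
        simp only [τ]
        ext a
        simp [mul_assoc]
        try tauto
      · show _ = _
        simp only [map_mul, Φ_of]
        simp only [T_mul_snd]
        simp [τ, mul_assoc]

/-- The congruence of `Φ`. -/
def kerC : Con (FreeSemigroup G) where
  r a b := Φ a = Φ b
  iseqv := ⟨fun _ => rfl, Eq.symm, Eq.trans⟩
  mul' h1 h2 := by
    show Φ _ = Φ _
    simp only [map_mul]
    rw [show Φ _ = Φ _ from h1, show Φ _ = Φ _ from h2]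

lemma sound {a b : FreeSemigroup G} (h : (conGen (exelRel G)) a b) : Φ a = Φ b :=
  (Con.conGen_le (c := kerC)).2 Φ_rel h

/-- The induced map on `S(G)`. -/
def phi : ExelSgp G → T G := fun x => Con.liftOn x Φ (fun _ _ h => sound h)

lemma phi_emk (a : FreeSemigroup G) : phi (emk a) = Φ a := rfl

lemma phi_mul (x y : ExelSgp G) : phi (x * y) = phi x * phi y :=
  Con.induction_on₂ x y fun a b => map_mul Φ a b

lemma phi_gen (g : G) : phi (exelGen g) = τ g := Φ_of g

lemma phi_eps (t : G) : (phi (eps t)).1 = ({1, t}, 1) := by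
  rw [eps, phi_mul, phi_gen, phi_gen]
  apply Prod.ext
  · show ({1, t} : Finset G) ∪ ({1, t⁻¹} : Finset G).image (t * ·) = {1, t}
    ext a
    simp
    tauto
  · show t * t⁻¹ = 1
    simp

lemma phi_form (l : List G) (g : G) :
    (phi (exelForm l g)).1 = (insert (1 : G) (insert g l.toFinset), g) := by
  induction l with
  | nil =>
      rw [form_nil, phi_gen]
      simp [τ]
  | cons t l ih =>
      rw [form_cons, phi_mul]
      apply Prod.ext
      · show (phi (eps t)).1.1 ∪ (phi (exelForm l g)).1.1.image ((phi (eps t)).1.2 * ·) = _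
        rw [phi_eps, ih]
        ext a
        simp [List.mem_toFinset]
        tauto
      · show (phi (eps t)).1.2 * (phi (exelForm l g)).1.2 = g
        rw [phi_eps, ih]
        exact one_mul g

lemma recover {l l' : List G} {g g' : G}
    (h1 : (1 : G) ∉ l) (hg : g ∉ l) (hn : l.Nodup)
    (h1' : (1 : G) ∉ l') (hg' : g' ∉ l') (hn' : l'.Nodup)
    (h : phi (exelForm l g) = phi (exelForm l' g')) : g' = g ∧ l'.Perm l := by
  have hp : (insert (1 : G) (insert g l.toFinset), g)
      = (insert (1 : G) (insert g' l'.toFinset), g') := by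
    rw [← phi_form, ← phi_form, h]
  have hgg : g = g' := congrArg Prod.snd hp
  subst hgg
  have hset : insert (1 : G) (insert g l.toFinset) = insert (1 : G) (insert g l'.toFinset) :=
    congrArg Prod.fst hp
  refine ⟨rfl, List.perm_of_nodup_nodup_toFinset_eq hn' hn ?_⟩
  ext t
  simp only [List.mem_toFinset]
  constructor
  · intro ht
    have : t ∈ insert (1 : G) (insert g l.toFinset) := by
      rw [hset]; simp [ht]
    rcases Finset.mem_insert.1 this with rfl | this
    · exact absurd ht h1'
    · rcases Finset.mem_insert.1 this with rfl | this
      · exact absurd ht hg'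
      · exact List.mem_toFinset.1 this
  · intro ht
    have : t ∈ insert (1 : G) (insert g l'.toFinset) := by
      rw [← hset]; simp [ht]
    rcases Finset.mem_insert.1 this with rfl | this
    · exact absurd ht h1
    · rcases Finset.mem_insert.1 this with rfl | this
      · exact absurd ht hg
      · exact List.mem_toFinset.1 this

lemma phi_inj {x y : ExelSgp G} (h : phi x = phi y) : x = y := by
  obtain ⟨l, g, hn, h1, hg, rfl⟩ := exists_std_form x
  obtain ⟨l', g', hn', h1', hg', rfl⟩ := exists_std_form y
  obtain ⟨rfl, hp⟩ := recover h1 hg hn h1' hg' hn' h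
  rw [form_perm hp.symm]

/-- The involution on the model. -/
def star (x : T G) : T G :=
  ⟨(x.1.1.image (x.1.2⁻¹ * ·), x.1.2⁻¹),
    ⟨Finset.mem_image.2 ⟨x.1.2, x.2.2, by simp⟩,
     Finset.mem_image.2 ⟨1, x.2.1, by simp⟩⟩⟩

lemma T_star_fst (x : T G) : (star x).1.1 = x.1.1.image (x.1.2⁻¹ * ·) := rfl
lemma T_star_snd (x : T G) : (star x).1.2 = x.1.2⁻¹ := rfl

lemma T_inv1 (x : T G) : x * star x * x = x := by
  apply Subtype.ext
  apply Prod.ext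
  · show (x.1.1 ∪ (star x).1.1.image (x.1.2 * ·)) ∪
      x.1.1.image ((x.1.2 * (star x).1.2) * ·) = x.1.1
    rw [T_star_fst, T_star_snd, Finset.image_image]
    ext a
    simp [Function.comp, mul_assoc]
  · show x.1.2 * (star x).1.2 * x.1.2 = x.1.2
    rw [T_star_snd]; simp

lemma T_inv2 (x : T G) : star x * x * star x = star x := by
  apply Subtype.ext
  apply Prod.ext
  · show ((star x).1.1 ∪ x.1.1.image ((star x).1.2 * ·)) ∪
      (star x).1.1.image (((star x).1.2 * x.1.2) * ·) = (star x).1.1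
    rw [T_star_fst, T_star_snd, Finset.image_image]
    ext a
    constructor
    · intro ha
      rcases Finset.mem_union.1 ha with h | h
      · rcases Finset.mem_union.1 h with h | h
        · exact h
        · exact h
      · obtain ⟨b, hb, hb2⟩ := Finset.mem_image.1 h
        refine Finset.mem_image.2 ⟨b, hb, ?_⟩
        simpa using hb2
    · intro h
      exact Finset.mem_union.2 (Or.inl (Finset.mem_union.2 (Or.inl h)))
  · show (star x).1.2 * x.1.2 * (star x).1.2 = (star x).1.2
    rw [T_star_snd]; simp

lemma T_unique (x y : T G) (hy1 : x * y * x = x) (hy2 : y * x * y = y) : y = star x := by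
  have hsnd : x.1.2 * y.1.2 * x.1.2 = x.1.2 := congrArg (fun z => z.1.2) hy1
  have hinv : x.1.2⁻¹ = y.1.2 :=
    inv_eq_of_mul_eq_one_right (mul_right_cancel (hsnd.trans (one_mul x.1.2).symm))
  have hfst1 : (x.1.1 ∪ y.1.1.image (x.1.2 * ·)) ∪
      x.1.1.image ((x.1.2 * y.1.2) * ·) = x.1.1 := congrArg (fun z => z.1.1) hy1
  have hfst2 : (y.1.1 ∪ x.1.1.image (y.1.2 * ·)) ∪
      y.1.1.image ((y.1.2 * x.1.2) * ·) = y.1.1 := congrArg (fun z => z.1.1) hy2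
  have hsub1 : y.1.1.image (x.1.2 * ·) ⊆ x.1.1 := by
    rw [← hfst1]
    intro a ha
    exact Finset.mem_union_left _ (Finset.mem_union_right _ ha)
  have hsub2 : x.1.1.image (y.1.2 * ·) ⊆ y.1.1 := by
    rw [← hfst2]
    intro a ha
    exact Finset.mem_union_left _ (Finset.mem_union_right _ ha)
  apply Subtype.ext
  apply Prod.ext
  · show y.1.1 = x.1.1.image (x.1.2⁻¹ * ·)
    apply Finset.Subset.antisymm
    · intro b hb
      refine Finset.mem_image.2 ⟨x.1.2 * b, hsub1 (Finset.mem_image_of_mem _ hb), by simp⟩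
    · rw [hinv]; exact hsub2
  · exact hinv.symm

lemma toFinset_map (f : G → G) (l : List G) : (l.map f).toFinset = l.toFinset.image f := by
  ext a
  simp

lemma phi_star_form (l : List G) (g : G) :
    phi (exelForm (l.map (g⁻¹ * ·)) g⁻¹) = star (phi (exelForm l g)) := by
  have hy := phi_form l g
  have h1 : (phi (exelForm l g)).1.1 = insert (1 : G) (insert g l.toFinset) :=
    congrArg Prod.fst hy
  have h2 : (phi (exelForm l g)).1.2 = g := congrArg Prod.snd hy
  apply Subtype.ext
  rw [phi_form]
  show _ = ((phi (exelForm l g)).1.1.image ((phi (exelForm l g)).1.2⁻¹ * ·),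
    (phi (exelForm l g)).1.2⁻¹)
  rw [h1, h2]
  apply Prod.ext
  · show insert (1 : G) (insert g⁻¹ (l.map (g⁻¹ * ·)).toFinset) = _
    rw [toFinset_map]
    ext a
    simp only [Finset.mem_insert, Finset.mem_image, List.mem_toFinset, List.mem_map]
    constructor
    · rintro (rfl | rfl | ⟨t, ht, rfl⟩)
      · exact ⟨g, Or.inr (Or.inl rfl), by simp⟩
      · exact ⟨1, Or.inl rfl, by simp⟩
      · exact ⟨t, Or.inr (Or.inr ht), rfl⟩
    · rintro ⟨b, (rfl | rfl | hb), rfl⟩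
      · simp
      · simp
      · exact Or.inr (Or.inr ⟨b, hb, rfl⟩)
  · rfl

end ExelAux

/-- Exel. `S(G)` is an inverse semigroup (each element has a unique
inner inverse), with unit `[ε]`, and every `x ∈ S(G)` has a decomposition
`x = [t₁][t₁⁻¹] ⋯ [t_r][t_r⁻¹][g]` with the `tᵢ` distinct and different from `ε` and
from `g`, unique up to the order of the factors `[tᵢ][tᵢ⁻¹]`. -/
theorem exel_semigroup_inverse_and_standard_form (G : Type*) [Group G] :
    (∀ x : ExelSgp G, ∃! y : ExelSgp G, x * y * x = x ∧ y * x * y = y) ∧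
    (∀ x : ExelSgp G, x * exelGen (1 : G) = x ∧ exelGen (1 : G) * x = x) ∧
    (∀ x : ExelSgp G, ∃ (l : List G) (g : G), l.Nodup ∧ (1 : G) ∉ l ∧ g ∉ l ∧
      x = exelForm l g ∧
      ∀ (l' : List G) (g' : G), l'.Nodup → (1 : G) ∉ l' → g' ∉ l' →
        x = exelForm l' g' → g' = g ∧ l'.Perm l) := by
  classical
  open ExelAux in
  refine ⟨?_, fun x => ⟨any_mul_one x, one_mul_any x⟩, ?_⟩
  · intro x
    obtain ⟨l, g, hn, h1, hg, rfl⟩ := exists_std_form x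
    refine ⟨exelForm (l.map (g⁻¹ * ·)) g⁻¹, ⟨?_, ?_⟩, ?_⟩
    · apply phi_inj
      rw [phi_mul, phi_mul, phi_star_form]
      exact congrArg _ rfl |>.trans (T_inv1 (phi (exelForm l g)))
    · apply phi_inj
      rw [phi_mul, phi_mul, phi_star_form]
      exact T_inv2 (phi (exelForm l g))
    · rintro z ⟨hz1, hz2⟩
      apply phi_inj
      rw [phi_star_form]
      apply T_unique
      · have := congrArg phi hz1
        rwa [phi_mul, phi_mul] at this
      · have := congrArg phi hz2
        rwa [phi_mul, phi_mul] at this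
  · intro x
    obtain ⟨l, g, hn, h1, hg, hx⟩ := exists_std_form x
    refine ⟨l, g, hn, h1, hg, hx, ?_⟩
    intro l' g' hn' h1' hg' heq
    exact recover h1 hg hn h1' hg' hn' (congrArg phi (hx.symm.trans heq))
end
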